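/- Derivations of a composition algebra are exactly the diagonal triality elements: let C be a composition algebra over F, with F of characteristic ≠ 2, 3, polar form b, and para-Hurwitz product x•y = x̄·ȳ. A linear map d : C → C is a derivation of C (i.e. d(x·y) = d(x)·y + x·d(y) for all x, y ∈ C) if and only if d is b-skew (b(d(x),y) + b(x,d(y)) = 0 for all x, y) and d(x•y) = d(x)•y + x•d(y) for all x, y ∈ C; that is, der C consists precisely of those d with (d,d,d) in the triality Lie algebra tri(C). -/
import Mathlib


/-- A composition algebra over a field `F`: a unital (not necessarily associative)
`F`-algebra endowed with a multiplicative quadratic form whose polar bilinear form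
is nondegenerate. -/
structure CompositionAlgebra (F : Type*) [Field F] (C : Type*)
    [AddCommGroup C] [Module F C] where
  mul : C →ₗ[F] C →ₗ[F] C
  one : C
  one_mul : ∀ x : C, mul one x = x
  mul_one : ∀ x : C, mul x one = x
  n : QuadraticForm F C
  norm_mul : ∀ x y : C, n (mul x y) = n x * n y
  nondeg : ∀ x : C, (∀ y : C, QuadraticMap.polar ⇑n x y = 0) → x = 0

/-- The polar form `b(x,y) = n(x+y) - n(x) - n(y)` of the norm. -/
def CompositionAlgebra.b {F : Type*} [Field F] {C : Type*} [AddCommGroup C] [Module F C]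
    (A : CompositionAlgebra F C) (x y : C) : F :=
  QuadraticMap.polar ⇑A.n x y

/-- The trace `t(x) = b(x,1)`. -/
def CompositionAlgebra.t {F : Type*} [Field F] {C : Type*} [AddCommGroup C] [Module F C]
    (A : CompositionAlgebra F C) (x : C) : F :=
  A.b x A.one

/-- The standard involution `x̄ = t(x)·1 − x`. -/
def CompositionAlgebra.conj {F : Type*} [Field F] {C : Type*} [AddCommGroup C] [Module F C]
    (A : CompositionAlgebra F C) (x : C) : C :=
  A.t x • A.one - x

/-- The para-Hurwitz product `x • y = x̄·ȳ`. -/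
def CompositionAlgebra.paraMul {F : Type*} [Field F] {C : Type*}
    [AddCommGroup C] [Module F C] (A : CompositionAlgebra F C) (x y : C) : C :=
  A.mul (A.conj x) (A.conj y)

namespace CompositionAlgebra
variable {F : Type*} [Field F] {C : Type*} [AddCommGroup C] [Module F C]
variable (A : CompositionAlgebra F C)

lemma b_comm (x y : C) : A.b x y = A.b y x := QuadraticMap.polar_comm _ x y
lemma b_add_left (x y z : C) : A.b (x + y) z = A.b x z + A.b y z :=
  QuadraticMap.polar_add_left A.n x y z
lemma b_add_right (x y z : C) : A.b x (y + z) = A.b x y + A.b x z :=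
  QuadraticMap.polar_add_right A.n x y z
lemma b_smul_left (a : F) (x y : C) : A.b (a • x) y = a * A.b x y := by
  simp only [CompositionAlgebra.b, QuadraticMap.polar_smul_left, smul_eq_mul]
lemma b_smul_right (a : F) (x y : C) : A.b x (a • y) = a * A.b x y := by
  simp only [CompositionAlgebra.b, QuadraticMap.polar_smul_right, smul_eq_mul]
lemma b_zero_left (y : C) : A.b 0 y = 0 := QuadraticMap.polar_zero_left A.n y
lemma b_zero_right (y : C) : A.b y 0 = 0 := QuadraticMap.polar_zero_right A.n y
lemma b_neg_left (x y : C) : A.b (-x) y = - A.b x y := QuadraticMap.polar_neg_left A.n x y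
lemma b_sub_left (x y z : C) : A.b (x - y) z = A.b x z - A.b y z :=
  QuadraticMap.polar_sub_left A.n x y z
lemma b_self (x : C) : A.b x x = 2 * A.n x := by
  simp only [CompositionAlgebra.b, QuadraticMap.polar_self]
  rw [two_smul, two_mul]

lemma mull_add (x y z : C) : A.mul (x + y) z = A.mul x z + A.mul y z := by
  rw [map_add]; rfl
lemma mulr_add (x y z : C) : A.mul x (y + z) = A.mul x y + A.mul x z := map_add _ _ _
lemma mull_smul (a : F) (x y : C) : A.mul (a • x) y = a • A.mul x y := by
  rw [map_smul]; rfl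
lemma mulr_smul (a : F) (x y : C) : A.mul x (a • y) = a • A.mul x y := map_smul _ _ _

lemma n_add (x y : C) : A.n (x + y) = A.n x + A.n y + A.b x y := by
  simp [CompositionAlgebra.b, QuadraticMap.polar]

lemma lemC (x y z : C) : A.b (A.mul x y) (A.mul z y) = A.b x z * A.n y := by
  simp only [CompositionAlgebra.b, QuadraticMap.polar, ← A.mull_add, A.norm_mul]
  ring

lemma lemA (x y z : C) : A.b (A.mul x y) (A.mul x z) = A.n x * A.b y z := by
  simp only [CompositionAlgebra.b, QuadraticMap.polar, ← A.mulr_add, A.norm_mul]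
  ring

lemma star (x y z w : C) :
    A.b (A.mul x y) (A.mul z w) + A.b (A.mul x w) (A.mul z y) = A.b x z * A.b y w := by
  have h := A.lemC x (y + w) z
  rw [A.mulr_add, A.mulr_add, A.b_add_left, A.b_add_right, A.b_add_right, A.n_add] at h
  linear_combination h - A.lemC x y z - A.lemC x w z


lemma n_one (hone : A.one ≠ 0) : A.n A.one = 1 := by
  obtain ⟨z, hz⟩ : ∃ z, A.b A.one z ≠ 0 := by
    by_contra h
    push_neg at h
    exact hone (A.nondeg _ h)
  have h1 := A.lemA A.one A.one z
  rw [A.one_mul, A.one_mul] at h1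
  have h2 : (A.n A.one - 1) * A.b A.one z = 0 := by linear_combination -h1
  rcases mul_eq_zero.mp h2 with h | h
  · linear_combination h
  · exact absurd h hz

lemma b_one_one (hone : A.one ≠ 0) : A.b A.one A.one = 2 := by
  rw [A.b_self, A.n_one hone]; ring

lemma t_def (x : C) : A.t x = A.b x A.one := rfl

lemma conj_def (x : C) : A.conj x = A.b x A.one • A.one - x := rfl

lemma conj_one (hone : A.one ≠ 0) : A.conj A.one = A.one := by
  rw [A.conj_def, A.b_one_one hone, two_smul]
  abel

lemma conj_neg (x : C) : A.conj (-x) = - A.conj x := by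
  rw [A.conj_def, A.conj_def, A.b_neg_left, neg_smul]
  abel

lemma b_conj_one (hone : A.one ≠ 0) (x : C) : A.b (A.conj x) A.one = A.b x A.one := by
  rw [A.conj_def, A.b_sub_left, A.b_smul_left, A.b_one_one hone]
  ring

lemma conj_conj (hone : A.one ≠ 0) (x : C) : A.conj (A.conj x) = x := by
  rw [A.conj_def (A.conj x), A.b_conj_one hone, A.conj_def]
  abel

lemma bL (x y z : C) : A.b (A.mul x y) z = A.b y A.one * A.b x z - A.b x (A.mul z y) := by
  have h := A.star x y z A.one
  rw [A.mul_one, A.mul_one] at h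
  linear_combination h

lemma b_mul_right_self (x z : C) : A.b x (A.mul z x) = A.b z A.one * A.n x := by
  have h := A.lemC z x A.one
  rw [A.one_mul] at h
  rw [A.b_comm]
  exact h

lemma mul_self_eq (hone : A.one ≠ 0) (x : C) :
    A.mul x x = A.b x A.one • x - A.n x • A.one := by
  have key : ∀ z, A.b (A.mul x x - (A.b x A.one • x - A.n x • A.one)) z = 0 := by
    intro z
    rw [A.b_sub_left, A.b_sub_left, A.b_smul_left, A.b_smul_left]
    linear_combination A.bL x x z - A.b_mul_right_self x z +
      A.n x * A.b_comm A.one z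
  have h0 := A.nondeg _ key
  rw [sub_eq_zero] at h0
  exact h0

lemma mul_polar (hone : A.one ≠ 0) (x y : C) :
    A.mul x y + A.mul y x
      = A.b x A.one • y + A.b y A.one • x - A.b x y • A.one := by
  have h := A.mul_self_eq hone (x + y)
  have hx := A.mul_self_eq hone x
  have hy := A.mul_self_eq hone y
  rw [A.mull_add, A.mulr_add, A.mulr_add, hx, hy, A.n_add, A.b_add_left] at h
  have goal' : A.mul x y + A.mul y x =
      ((A.b x A.one + A.b y A.one) • (x + y) - (A.n x + A.n y + A.b x y) • A.one)
        - (A.b x A.one • x - A.n x • A.one) - (A.b y A.one • y - A.n y • A.one) := by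
    rw [← h]; abel
  rw [goal']
  module

lemma paraMul_def (x y : C) : A.paraMul x y = A.mul (A.conj x) (A.conj y) := rfl

end CompositionAlgebra

lemma prime_char_ne_zero {F : Type*} [Field F] {p : ℕ} (hp : p.Prime)
    (h : ringChar F ≠ p) : (p : F) ≠ 0 := by
  intro h0
  have hd : ringChar F ∣ p := (ringChar.spec F p).mp h0
  rcases (Nat.Prime.eq_one_or_self_of_dvd hp _ hd) with h1 | h1
  · have : ((ringChar F : ℕ) : F) = 0 := ringChar.spec F (ringChar F) |>.mpr dvd_rfl
    rw [h1] at this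
    simp at this
  · exact h h1

/-- In characteristic `≠ 2, 3`, a linear map `d` is a derivation of the composition
algebra `C` if and only if it is `b`-skew and `(d,d,d)` lies in the triality Lie
algebra of the para-Hurwitz product. -/

theorem derivation_iff_diagonal_triality {F : Type*} [Field F] {C : Type*}
    [AddCommGroup C] [Module F C] [FiniteDimensional F C]
    (h2 : ringChar F ≠ 2) (h3 : ringChar F ≠ 3)
    (A : CompositionAlgebra F C) (d : C →ₗ[F] C) :
    (∀ x y : C, d (A.mul x y) = A.mul (d x) y + A.mul x (d y)) ↔
    ((∀ x y : C, A.b (d x) y + A.b x (d y) = 0) ∧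
     (∀ x y : C, d (A.paraMul x y) = A.paraMul (d x) y + A.paraMul x (d y))) := by
  have h2' : (2:F) ≠ 0 := by
    have := prime_char_ne_zero (F := F) Nat.prime_two h2
    simpa using this
  have h3' : (3:F) ≠ 0 := by
    have := prime_char_ne_zero (F := F) Nat.prime_three h3
    simpa using this
  by_cases hone : A.one = 0
  · -- degenerate case: C is trivial
    have hall : ∀ x : C, x = 0 := fun x => by
      have hx := A.one_mul x
      rw [hone] at hx
      rw [← hx, map_zero, LinearMap.zero_apply]
    have heq : ∀ u v : C, u = v := fun u v => (hall u).trans (hall v).symm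
    constructor
    · intro _
      refine ⟨fun x y => ?_, fun x y => heq _ _⟩
      rw [hall x, hall y, map_zero, A.b_zero_right]
      norm_num
    · intro _
      intro x y
      exact heq _ _
  · constructor
    · intro hd
      have hd1 : d A.one = 0 := by
        have h := hd A.one A.one
        rw [A.one_mul A.one, A.mul_one (d A.one), A.one_mul (d A.one)] at h
        exact left_eq_add.mp h
      have key2 : ∀ x : C, A.b (d x) A.one • x = A.b (d x) x • A.one := by
        intro x
        have h := hd x x
        rw [A.mul_self_eq hone x, map_sub, map_smul, map_smul, hd1, smul_zero, sub_zero,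
          A.mul_polar hone (d x) x] at h
        linear_combination (norm := module) -h
      have tz : ∀ x : C, A.b (d x) A.one = 0 := by
        intro x
        by_cases hx : (2:F) • x - A.b x A.one • A.one = 0
        · have hx2 : (2:F) • x = A.b x A.one • A.one := by rwa [sub_eq_zero] at hx
          have hdx : (2:F) • d x = 0 := by
            have h := congrArg d hx2
            rw [map_smul, map_smul, hd1, smul_zero] at h
            exact h
          have hdx0 : d x = 0 := ((smul_eq_zero.mp hdx).resolve_left h2')
          rw [hdx0, A.b_zero_left]
        · have k := key2 x
          have k2 := congrArg (fun u => A.b u A.one) k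
          simp only [A.b_smul_left] at k2
          rw [A.b_one_one hone] at k2
          have k3 : A.b (d x) A.one • ((2:F) • x - A.b x A.one • A.one) = 0 := by
            rw [smul_sub, smul_smul, mul_comm (A.b (d x) A.one) 2, ← smul_smul, k,
              smul_smul, smul_smul, ← sub_smul,
              show 2 * A.b (d x) x - A.b (d x) A.one * A.b x A.one = 0 from by
                linear_combination -k2,
              zero_smul]
          exact ((smul_eq_zero.mp k3).resolve_right hx)
      have r0 : ∀ x : C, A.b (d x) x = 0 := by
        intro x
        have k := key2 x
        rw [tz x, zero_smul] at k
        exact ((smul_eq_zero.mp k.symm).resolve_right hone)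
      refine ⟨fun x y => ?_, fun x y => ?_⟩
      · have h := r0 (x + y)
        rw [map_add, A.b_add_left, A.b_add_right, A.b_add_right, r0 x, r0 y] at h
        rw [A.b_comm x (d y)]
        linear_combination h
      · have dconj : ∀ u : C, d (A.conj u) = - d u := fun u => by
          rw [A.conj_def, map_sub, map_smul, hd1, smul_zero, zero_sub]
        have cd : ∀ u : C, A.conj (d u) = - d u := fun u => by
          rw [A.conj_def, tz u, zero_smul, zero_sub]
        show d (A.mul (A.conj x) (A.conj y))
            = A.mul (A.conj (d x)) (A.conj y) + A.mul (A.conj x) (A.conj (d y))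
        rw [hd (A.conj x) (A.conj y), dconj x, dconj y, cd x, cd y]
    · rintro ⟨hs, hp⟩
      have t0 : A.b (d A.one) A.one = 0 := by
        have h := hs A.one A.one
        rw [A.b_comm A.one (d A.one)] at h
        have h' : (2:F) * A.b (d A.one) A.one = 0 := by linear_combination h
        exact (mul_eq_zero.mp h').resolve_left h2'
      have de0 : d A.one = 0 := by
        have hpe := hp A.one A.one
        rw [A.paraMul_def, A.paraMul_def, A.paraMul_def, A.conj_one hone,
          A.one_mul A.one, A.mul_one, A.one_mul] at hpe
        rw [A.conj_def, t0, zero_smul, zero_sub] at hpe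
        have h30 : (3:F) • d A.one = 0 := by
          have e1 : (3:F) • d A.one = d A.one - (-d A.one + -d A.one) := by module
          rw [e1, ← hpe, sub_self]
        exact ((smul_eq_zero.mp h30).resolve_left h3')
      have tz : ∀ x : C, A.b (d x) A.one = 0 := fun x => by
        have h := hs x A.one
        rw [de0, A.b_zero_right, add_zero] at h
        exact h
      have dconj : ∀ u : C, d (A.conj u) = - d u := fun u => by
        rw [A.conj_def, map_sub, map_smul, de0, smul_zero, zero_sub]
      have cd : ∀ u : C, A.conj (d u) = - d u := fun u => by
        rw [A.conj_def, tz u, zero_smul, zero_sub]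
      intro x y
      have h := hp (A.conj x) (A.conj y)
      rw [A.paraMul_def, A.paraMul_def, A.paraMul_def, dconj x, dconj y,
        A.conj_neg, A.conj_neg, cd x, cd y, neg_neg, neg_neg,
        A.conj_conj hone x, A.conj_conj hone y] at h
      exact h
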